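/- Let T be a triangulation (maximal set of pairwise non-crossing diagonals) of a convex polygon P with vertex set {s, s+1, ..., t}, and let d be any diagonal of P. Then there is a finite sequence of diagonal flips (mutations) transforming T into a triangulation containing d. -/

import Mathlib

/-- A diagonal of the polygon with vertex set `{s, …, t}`: a pair `(u,v)` with
`s ≤ u < v ≤ t`, `v ≥ u + 2` and `(u,v) ≠ (s,t)`. -/
def IsDiag (s t : ℤ) (d : ℤ × ℤ) : Prop :=
  s ≤ d.1 ∧ d.1 + 2 ≤ d.2 ∧ d.2 ≤ t ∧ d ≠ (s, t)

def Cross (a b : ℤ × ℤ) : Prop :=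
  (a.1 < b.1 ∧ b.1 < a.2 ∧ a.2 < b.2) ∨ (b.1 < a.1 ∧ a.1 < b.2 ∧ b.2 < a.2)

/-- A triangulation of the polygon with vertices `{s, …, t}`: a maximal set of
pairwise non-crossing diagonals. -/
def IsTriangulation (s t : ℤ) (T : Set (ℤ × ℤ)) : Prop :=
  (∀ d ∈ T, IsDiag s t d) ∧
  (∀ a ∈ T, ∀ b ∈ T, ¬ Cross a b) ∧
  (∀ d : ℤ × ℤ, IsDiag s t d → d ∉ T → ∃ e ∈ T, Cross d e ∨ Cross e d)

/-- A single diagonal flip: remove a diagonal and replace it by another one, yielding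
again a triangulation. -/
def FlipStep (s t : ℤ) (T T' : Set (ℤ × ℤ)) : Prop :=
  IsTriangulation s t T ∧ IsTriangulation s t T' ∧
  ∃ d d' : ℤ × ℤ, d ∈ T ∧ d' ∉ T ∧ T' = insert d' (T \ {d})

/-!
Every diagonal `(x, y)` of a triangulation is the common side of two of its triangles. The one
inside `[x, y]` has as apex the largest `p < y` such that `(x, p)` is an edge; the one outside is
the inner triangle of the smallest edge enclosing `(x, y)`. Flipping `(x, y)` exchanges the two
diagonals of the quadrilateral formed by these triangles. To reach a diagonal `d`, flip the
shortest diagonal of `T` crossing `d`: by minimality the apex of its inner triangle is an endpoint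
of `d`, so the new diagonal does not cross `d`, and fewer diagonals of the triangulation cross `d`.
-/

/-- The edges of `T`: the sides `(u, u + 1)` and `(s, t)` of the polygon, and the
diagonals in `T`. -/
def IsEdge (s t : ℤ) (T : Set (ℤ × ℤ)) (e : ℤ × ℤ) : Prop :=
  e.2 = e.1 + 1 ∨ e = (s, t) ∨ e ∈ T

def quadSides (a b c d : ℤ) : Set (ℤ × ℤ) :=
  {(a, b), (b, c), (c, d), (a, d)}

def IsQuadDiags (a b c d : ℤ) (e e' : ℤ × ℤ) : Prop :=
  (e = (a, c) ∧ e' = (b, d)) ∨ (e = (b, d) ∧ e' = (a, c))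

def crossingSet (T : Set (ℤ × ℤ)) (d : ℤ × ℤ) : Set (ℤ × ℤ) :=
  {e ∈ T | Cross e d}

lemma cross_mk_iff {a b c d : ℤ} :
    Cross (a, b) (c, d) ↔ (a < c ∧ c < b ∧ b < d) ∨ (c < a ∧ a < d ∧ d < b) :=
  Iff.rfl

lemma Cross.symm {e f : ℤ × ℤ} (h : Cross e f) : Cross f e :=
  Or.symm h

lemma cross_irrefl (e : ℤ × ℤ) : ¬Cross e e := by
  obtain ⟨u, v⟩ := e
  rw [cross_mk_iff]
  omega

lemma isDiag_mk_iff {s t u v : ℤ} :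
    IsDiag s t (u, v) ↔ s ≤ u ∧ u + 2 ≤ v ∧ v ≤ t ∧ ¬(u = s ∧ v = t) := by
  simp [IsDiag, Prod.ext_iff]

lemma forall_mem_quadSides {a b c d : ℤ} {P : ℤ × ℤ → Prop} :
    (∀ σ ∈ quadSides a b c d, P σ) ↔ P (a, b) ∧ P (b, c) ∧ P (c, d) ∧ P (a, d) := by
  simp [quadSides]

lemma IsQuadDiags.symm {a b c d : ℤ} {e e' : ℤ × ℤ} (h : IsQuadDiags a b c d e e') :
    IsQuadDiags a b c d e' e :=
  (h.imp And.symm And.symm).symm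

section Quadrilateral

variable {a b c d : ℤ} {e e' : ℤ × ℤ}

lemma IsQuadDiags.cross (hab : a < b) (hbc : b < c) (hcd : c < d)
    (h : IsQuadDiags a b c d e e') : Cross e e' := by
  rcases h with ⟨rfl, rfl⟩ | ⟨rfl, rfl⟩ <;> rw [cross_mk_iff] <;> omega

lemma IsQuadDiags.not_mem_quadSides (hab : a < b) (hbc : b < c) (hcd : c < d)
    (h : IsQuadDiags a b c d e e') : e ∉ quadSides a b c d := by
  rcases h with ⟨rfl, rfl⟩ | ⟨rfl, rfl⟩ <;> simp [quadSides, Prod.ext_iff] <;> omega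

lemma IsQuadDiags.cross_side_or_cross (hab : a < b) (hbc : b < c) (hcd : c < d)
    (h : IsQuadDiags a b c d e e') {f : ℤ × ℤ} (hfe : Cross f e) (hfe' : f ≠ e') :
    (∃ σ ∈ quadSides a b c d, Cross f σ) ∨ Cross f e' := by
  obtain ⟨w, z⟩ := f
  obtain ⟨x, y⟩ := e
  obtain ⟨p, q⟩ := e'
  simp only [quadSides, Set.mem_insert_iff, Set.mem_singleton_iff, exists_eq_or_imp,
    exists_eq_left]
  simp only [IsQuadDiags, cross_mk_iff, ne_eq, Prod.ext_iff] at h hfe hfe' ⊢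
  -- the position of `w` and `z` relative to the endpoints of `e'` decides what `f` crosses
  rcases lt_trichotomy w p with _ | _ | _ <;> rcases lt_trichotomy z p with _ | _ | _ <;>
    rcases lt_trichotomy w q with _ | _ | _ <;> rcases lt_trichotomy z q with _ | _ | _ <;>
    rcases h with ⟨⟨rfl, rfl⟩, rfl, rfl⟩ | ⟨⟨rfl, rfl⟩, rfl, rfl⟩
  all_goals first
    | exact .inl (.inl (by omega))
    | exact .inl (.inr (.inl (by omega)))
    | exact .inl (.inr (.inr (.inl (by omega))))
    | exact .inl (.inr (.inr (.inr (by omega))))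
    | exact .inr (by omega)

end Quadrilateral

lemma IsEdge.mem_of_cross {s t : ℤ} {T : Set (ℤ × ℤ)} {e f : ℤ × ℤ}
    (he : IsEdge s t T e) (hf : IsDiag s t f) (hfe : Cross f e) : e ∈ T := by
  obtain ⟨u, v⟩ := e
  obtain ⟨w, z⟩ := f
  rw [isDiag_mk_iff] at hf
  rw [cross_mk_iff] at hfe
  rcases he with h | h | h
  · dsimp only at h
    omega
  · simp only [Prod.ext_iff] at h
    omega
  · exact h

namespace IsTriangulation

variable {s t : ℤ} {T : Set (ℤ × ℤ)}

lemma isDiag_mk (hT : IsTriangulation s t T) {u v : ℤ} (h : (u, v) ∈ T) :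
    s ≤ u ∧ u + 2 ≤ v ∧ v ≤ t ∧ ¬(u = s ∧ v = t) :=
  isDiag_mk_iff.1 (hT.1 _ h)

lemma finite (hT : IsTriangulation s t T) : T.Finite :=
  ((Set.finite_Icc s t).prod (Set.finite_Icc s t)).subset fun e he => by
    obtain ⟨h1, h2, h3, -⟩ := hT.1 e he
    exact ⟨⟨h1, by omega⟩, ⟨by omega, h3⟩⟩

lemma finite_crossingSet (hT : IsTriangulation s t T) (d : ℤ × ℤ) :
    (crossingSet T d).Finite :=
  hT.finite.subset fun _ he => he.1

lemma not_cross_edge (hT : IsTriangulation s t T) {e f : ℤ × ℤ} (hf : f ∈ T)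
    (he : IsEdge s t T e) : ¬Cross f e :=
  fun h => hT.2.1 f hf e (he.mem_of_cross (hT.1 f hf) h) h

lemma exists_cross_of_not_mem (hT : IsTriangulation s t T) {d : ℤ × ℤ} (hd : IsDiag s t d)
    (hdT : d ∉ T) : ∃ e ∈ T, Cross d e := by
  obtain ⟨e, he, hde⟩ := hT.2.2 d hd hdT
  exact ⟨e, he, hde.elim id Cross.symm⟩

lemma bounds_of_isEdge (hT : IsTriangulation s t T) {u v : ℤ} (he : IsEdge s t T (u, v))
    (h : u + 2 ≤ v) : s ≤ u ∧ v ≤ t := by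
  rcases he with he | he | he
  · dsimp only at he
    omega
  · simp only [Prod.ext_iff] at he
    omega
  · have := hT.isDiag_mk he
    omega

/-- The triangle of `T` inside an edge `(u, v)`. -/
theorem exists_inner_apex (hT : IsTriangulation s t T) {u v : ℤ} (huv : IsEdge s t T (u, v))
    (huv2 : u + 2 ≤ v) :
    ∃ p, u < p ∧ p < v ∧ IsEdge s t T (u, p) ∧ IsEdge s t T (p, v) := by
  obtain ⟨hsu, hvt⟩ := hT.bounds_of_isEdge huv huv2
  obtain ⟨p, ⟨hup, hpv, hup_edge⟩, hmax⟩ := Int.exists_greatest_of_bdd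
    (P := fun w => u < w ∧ w < v ∧ IsEdge s t T (u, w)) ⟨v, fun w hw => hw.2.1.le⟩
    ⟨u + 1, by omega, by omega, Or.inl rfl⟩
  refine ⟨p, hup, hpv, hup_edge, ?_⟩
  by_contra hpv_edge
  have hpv2 : p + 2 ≤ v := by
    by_contra
    exact hpv_edge (Or.inl (by dsimp only; omega))
  obtain ⟨⟨w, z⟩, hg, hcross⟩ := hT.exists_cross_of_not_mem
    (isDiag_mk_iff.2 ⟨by omega, hpv2, hvt, by omega⟩) fun h => hpv_edge (Or.inr (Or.inr h))
  have hg_uv := hT.not_cross_edge hg huv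
  have hg_up := hT.not_cross_edge hg hup_edge
  have hg_ne : ¬(w = u ∧ p < z ∧ z < v) := by
    rintro ⟨rfl, hpz, hzv⟩
    have := hmax z ⟨by omega, hzv, Or.inr (Or.inr hg)⟩
    omega
  rw [cross_mk_iff] at hcross hg_uv hg_up
  omega

theorem exists_outer_apex (hT : IsTriangulation s t T) {x y : ℤ} (hxy : (x, y) ∈ T) :
    ∃ q, (q < x ∧ IsEdge s t T (q, x) ∧ IsEdge s t T (q, y)) ∨
      (y < q ∧ IsEdge s t T (y, q) ∧ IsEdge s t T (x, q)) := by
  obtain ⟨hsx, hxy2, hyt, hxy_ne⟩ := hT.isDiag_mk hxy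
  set S := {e ∈ insert (s, t) T | e.1 ≤ x ∧ y ≤ e.2 ∧ e ≠ (x, y)}
  have hS : S.Finite := (hT.finite.insert _).subset fun e he => he.1
  have hst : (s, t) ∈ S :=
    ⟨Set.mem_insert _ _, hsx, hyt, by simp only [ne_eq, Prod.ext_iff]; omega⟩
  obtain ⟨⟨u, v⟩, ⟨huv_mem, hux, hyv, huv_ne⟩, hmin⟩ :=
    hS.exists_minimalFor (fun e => e.2 - e.1) S ⟨_, hst⟩
  have huv : IsEdge s t T (u, v) := by
    rcases huv_mem with h | h
    · exact Or.inr (Or.inl h)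
    · exact Or.inr (Or.inr h)
  have enclosing : ∀ {u' v'}, IsEdge s t T (u', v') → u' ≤ x → y ≤ v' →
      v' - u' < v - u → (u', v') = (x, y) := by
    intro u' v' he hu' hv' hlt
    by_contra hne
    have hmem : (u', v') ∈ insert (s, t) T := by
      rcases he with h | h | h
      · dsimp only at h
        omega
      · exact Or.inl h
      · exact Or.inr h
    have := hmin ⟨hmem, hu', hv', hne⟩ (by dsimp only; omega)
    dsimp only at this
    omega
  obtain ⟨p, hup, hpv, hup_edge, hpv_edge⟩ := hT.exists_inner_apex huv (by omega)
  rcases le_or_gt p x with hpx | hxp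
  · obtain ⟨rfl, rfl⟩ := Prod.ext_iff.1 (enclosing hpv_edge hpx hyv (by omega))
    exact ⟨u, Or.inl ⟨hup, hup_edge, huv⟩⟩
  rcases le_or_gt y p with hyp | hpy
  · obtain ⟨rfl, rfl⟩ := Prod.ext_iff.1 (enclosing hup_edge hux hyp (by omega))
    exact ⟨v, Or.inr ⟨hpv, hpv_edge, huv⟩⟩
  have hxy_up := hT.not_cross_edge hxy hup_edge
  have hxy_pv := hT.not_cross_edge hxy hpv_edge
  rw [cross_mk_iff] at hxy_up hxy_pv
  simp only [ne_eq, Prod.ext_iff] at huv_ne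
  omega

theorem flipStep_of_quad (hT : IsTriangulation s t T) {a b c d : ℤ} (hab : a < b) (hbc : b < c)
    (hcd : c < d) (hsides : ∀ σ ∈ quadSides a b c d, IsEdge s t T σ) {e e' : ℤ × ℤ}
    (hdiags : IsQuadDiags a b c d e e') (he : e ∈ T) :
    FlipStep s t T (insert e' (T \ {e})) := by
  have hee' : Cross e e' := hdiags.cross hab hbc hcd
  have he'T : e' ∉ T := fun h => hT.2.1 e he e' h hee'
  have he'_diag : IsDiag s t e' := by
    obtain ⟨hsa, hdt⟩ :=
      hT.bounds_of_isEdge ((forall_mem_quadSides.1 hsides).2.2.2) (by omega)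
    rcases hdiags with ⟨rfl, rfl⟩ | ⟨rfl, rfl⟩ <;> rw [isDiag_mk_iff] <;> omega
  have hnot_cross : ∀ g ∈ T, g ≠ e → ¬Cross g e' := by
    intro g hg hge hge'
    rcases hdiags.symm.cross_side_or_cross hab hbc hcd hge' hge with ⟨σ, hσ, hgσ⟩ | hge
    · exact hT.not_cross_edge hg (hsides σ hσ) hgσ
    · exact hT.2.1 g hg e he hge
  refine ⟨hT, ⟨?_, ?_, ?_⟩, e, e', he, he'T, rfl⟩
  · rintro f (rfl | ⟨hf, -⟩)
    exacts [he'_diag, hT.1 f hf]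
  · rintro f (rfl | ⟨hf, hfe⟩) g (rfl | ⟨hg, hge⟩)
    · exact cross_irrefl _
    · exact fun h => hnot_cross g hg hge h.symm
    · exact hnot_cross f hf hfe
    · exact hT.2.1 f hf g hg
  · intro f hf hfT'
    have hfe' : f ≠ e' := fun h => hfT' (Or.inl h)
    by_cases hfe : f = e
    · exact ⟨e', Or.inl rfl, Or.inl (hfe ▸ hee')⟩
    obtain ⟨g, hg, hfg⟩ := hT.exists_cross_of_not_mem hf fun h => hfT' (Or.inr ⟨h, hfe⟩)
    by_cases hge : g = e
    · subst hge
      rcases hdiags.cross_side_or_cross hab hbc hcd hfg hfe' with ⟨σ, hσ, hfσ⟩ | hfe'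
      · refine ⟨σ, Or.inr ⟨(hsides σ hσ).mem_of_cross hf hfσ, ?_⟩, Or.inl hfσ⟩
        rintro rfl
        exact hdiags.not_mem_quadSides hab hbc hcd hσ
      · exact ⟨e', Or.inl rfl, Or.inl hfe'⟩
    · exact ⟨g, Or.inr ⟨hg, hge⟩, Or.inl hfg⟩

theorem exists_flipStep (hT : IsTriangulation s t T) {x y p : ℤ} (hxy : (x, y) ∈ T)
    (hxp : x < p) (hpy : p < y) (hxp_edge : IsEdge s t T (x, p))
    (hpy_edge : IsEdge s t T (p, y)) :
    ∃ e', (e'.1 = p ∨ e'.2 = p) ∧ FlipStep s t T (insert e' (T \ {(x, y)})) := by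
  obtain ⟨q, ⟨hqx, hqx_edge, hqy_edge⟩ | ⟨hyq, hyq_edge, hxq_edge⟩⟩ :=
    hT.exists_outer_apex hxy
  · exact ⟨(q, p), Or.inr rfl, hT.flipStep_of_quad hqx hxp hpy
      (forall_mem_quadSides.2 ⟨hqx_edge, hxp_edge, hpy_edge, hqy_edge⟩)
      (Or.inr ⟨rfl, rfl⟩) hxy⟩
  · exact ⟨(p, q), Or.inl rfl, hT.flipStep_of_quad hxp hpy hyq
      (forall_mem_quadSides.2 ⟨hxp_edge, hpy_edge, hyq_edge, hxq_edge⟩)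
      (Or.inl ⟨rfl, rfl⟩) hxy⟩

theorem exists_flipStep_crossingSet_ssubset (hT : IsTriangulation s t T) {d : ℤ × ℤ}
    (hd : IsDiag s t d) (hne : (crossingSet T d).Nonempty) :
    ∃ T', FlipStep s t T T' ∧ crossingSet T' d ⊂ crossingSet T d := by
  obtain ⟨⟨x, y⟩, ⟨hxyT, hxy_d⟩, hmin⟩ :=
    (hT.finite_crossingSet d).exists_minimalFor (fun e => e.2 - e.1) _ hne
  obtain ⟨hsx, hxy2, hyt, -⟩ := hT.isDiag_mk hxyT
  obtain ⟨p, hxp, hpy, hxp_edge, hpy_edge⟩ := hT.exists_inner_apex (Or.inr (Or.inr hxyT)) hxy2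
  have shorter : ∀ {u v}, IsEdge s t T (u, v) → v - u < y - x → ¬Cross (u, v) d := by
    intro u v he hlt hc
    have := hmin ⟨he.mem_of_cross hd hc.symm, hc⟩ (by dsimp only; omega)
    dsimp only at this
    omega
  have hp : p = d.1 ∨ p = d.2 := by
    have hxp_d := shorter hxp_edge (by omega)
    have hpy_d := shorter hpy_edge (by omega)
    obtain ⟨a, b⟩ := d
    rw [cross_mk_iff] at hxy_d hxp_d hpy_d
    omega
  obtain ⟨⟨w, z⟩, he'p, hstep⟩ := hT.exists_flipStep hxyT hxp hpy hxp_edge hpy_edge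
  refine ⟨_, hstep, Set.ssubset_of_subset_of_ssubset ?_
    (Set.sdiff_singleton_ssubset.2 ⟨hxyT, hxy_d⟩)⟩
  rintro f ⟨rfl | ⟨hfT, hfxy⟩, hfd⟩
  · obtain ⟨a, b⟩ := d
    rw [cross_mk_iff] at hfd
    dsimp only at hp he'p
    omega
  · exact ⟨⟨hfT, hfd⟩, hfxy⟩

lemma mem_of_crossingSet_eq_empty (hT : IsTriangulation s t T) {d : ℤ × ℤ} (hd : IsDiag s t d)
    (h : crossingSet T d = ∅) : d ∈ T := by
  by_contra hdT
  obtain ⟨e, he, hde⟩ := hT.exists_cross_of_not_mem hd hdT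
  exact h.subset ⟨he, hde.symm⟩

end IsTriangulation

/-- Any triangulation of the polygon with vertices `{s, …, t}` can be transformed by a
finite sequence of diagonal flips into a triangulation containing any prescribed
diagonal `d`. -/
theorem flip_connectivity
    (s t : ℤ) (T : Set (ℤ × ℤ)) (hT : IsTriangulation s t T)
    (d : ℤ × ℤ) (hd : IsDiag s t d) :
    ∃ T' : Set (ℤ × ℤ), Relation.ReflTransGen (FlipStep s t) T T' ∧
      IsTriangulation s t T' ∧ d ∈ T' := by
  induction hn : (crossingSet T d).ncard using Nat.strong_induction_on generalizing T with
  | _ n ih =>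
    rcases (crossingSet T d).eq_empty_or_nonempty with h | h
    · exact ⟨T, .refl, hT, hT.mem_of_crossingSet_eq_empty hd h⟩
    obtain ⟨T', hstep, hlt⟩ := hT.exists_flipStep_crossingSet_ssubset hd h
    have hcard : (crossingSet T' d).ncard < n :=
      hn ▸ Set.ncard_lt_ncard hlt (hT.finite_crossingSet d)
    obtain ⟨T'', hreach, hT'', hdT''⟩ := ih _ hcard T' hstep.2.1 rfl
    exact ⟨T'', .head hstep hreach, hT'', hdT''⟩
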